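/- Let F_q be a finite field and d a positive integer. For a monic polynomial f of degree d in F_q[x], let \Omega(f) denote the total number of irreducible factors of f counted with multiplicity, and define sgn(f) = (-1)^{d - \Omega(f)}. Then \sum_{f} sgn(f) = q^{\lceil d/2 \rceil}, where the sum runs over all monic polynomials f of degree d in F_q[x]. -/

import Mathlib

open Polynomial

/-- `Ω(f)`: the number of irreducible factors of `f`, counted with multiplicity. -/
noncomputable def bigOmega {F : Type*} [Field F] (f : F[X]) : ℕ :=
  Multiset.card (UniqueFactorizationMonoid.factors f)

/-!
Write `λ(f) = (-1)^Ω(f)`, so that `sgn(f) = (-1)^d λ(f)`. As `λ` is completely multiplicative,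
`∑_{g ∣ f, g monic} λ(g)` is `1` if `f` is a square and `0` otherwise: it is an alternating sum
over the sub-multisets of the irreducible factors of `f`. Summing this over the monic `f` of
degree `n`, and noting that a monic `g` of degree `a ≤ n` has `q^(n-a)` monic multiples of
degree `n`, gives with `T(a) = ∑_{deg g = a} λ(g)`
  `∑_{a ≤ n} T(a) q^(n-a) = #{monic squares of degree n} = [n even] q^(n/2)`.
Subtracting `q` times the identity for `n - 1` from the one for `n` isolates `T(n)`.
-/

open Finset

namespace Multiset

variable {α : Type*} [DecidableEq α]

lemma count_eq_zero_or_of_disjoint {s t : Multiset α} (h : Disjoint s t) (a : α) :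
    count a s = 0 ∨ count a t = 0 := by
  by_contra! hst
  exact disjoint_left.1 h (count_ne_zero.1 hst.1) (count_ne_zero.1 hst.2)

theorem sum_Iic_add_of_disjoint {M : Type*} [AddCommMonoid M] {s t : Multiset α}
    (h : Disjoint s t) (g : Multiset α → M) :
    ∑ w ∈ Finset.Iic (s + t), g w = ∑ u ∈ Finset.Iic s, ∑ v ∈ Finset.Iic t, g (u + v) := by
  rw [← sum_product']
  have hst := count_eq_zero_or_of_disjoint h
  refine (sum_nbij' (fun p : Multiset α × Multiset α => p.1 + p.2) (fun w => (w ∩ s, w ∩ t))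
    ?_ ?_ ?_ ?_ fun _ _ => rfl).symm
  · simp only [Finset.mem_product, Finset.mem_Iic, and_imp, Prod.forall]
    exact fun u v hu hv => add_le_add hu hv
  · simp [inter_le_right]
  · simp only [Finset.mem_product, Finset.mem_Iic, and_imp, Prod.forall, Prod.mk.injEq,
      le_iff_count]
    refine fun u v hu hv => ⟨ext.2 fun b => ?_, ext.2 fun b => ?_⟩ <;>
    · simp only [count_inter, count_add]
      have := hu b; have := hv b; have := hst b
      omega
  · simp only [Finset.mem_Iic, le_iff_count]
    refine fun w hw => ext.2 fun b => ?_
    simp only [count_inter, count_add] at hw ⊢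
    have := hw b; have := hst b
    omega

theorem sum_Iic_replicate {M : Type*} [AddCommMonoid M] (g : Multiset α → M) (k : ℕ) (a : α) :
    ∑ w ∈ Finset.Iic (replicate k a), g w = ∑ i ∈ Finset.range (k + 1), g (replicate i a) := by
  have : Finset.Iic (replicate k a) = (Finset.range (k + 1)).image (replicate · a) := by
    ext w
    simp [le_replicate_iff, eq_comm]
  rw [this, sum_image fun i _ j _ h => by simpa using congrArg card h]

theorem even_replicate_add_iff {s : Multiset α} {a : α} (ha : a ∉ s) (k : ℕ) :
    Even (replicate k a + s) ↔ Even k ∧ Even s := by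
  constructor
  · rintro ⟨r, hr⟩
    refine ⟨⟨r.count a, ?_⟩, ⟨r.filter (· ≠ a), ?_⟩⟩
    · simpa [count_eq_zero.2 ha] using congrArg (count a) hr
    · have hk : filter (· ≠ a) (replicate k a) = 0 :=
        filter_eq_nil.2 fun b hb => not_not.2 (eq_of_mem_replicate hb)
      simpa [filter_add, hk, filter_eq_self.2 fun b hb => ne_of_mem_of_not_mem hb ha] using
        congrArg (filter (· ≠ a)) hr
  · rintro ⟨⟨m, rfl⟩, ⟨r, rfl⟩⟩
    exact ⟨replicate m a + r, by rw [replicate_add]; abel⟩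

open scoped Classical in
theorem sum_Iic_neg_one_pow_card (s : Multiset α) :
    ∑ t ∈ Finset.Iic s, (-1 : ℤ) ^ card t = if Even s then 1 else 0 := by
  induction s using strongInductionOn with
  | ih s ih =>
  rcases s.empty_or_exists_mem with rfl | ⟨a, ha⟩
  · rw [← bot_eq_zero, Finset.Iic_bot]
    simp [bot_eq_zero]
  set s' := filter (· ≠ a) s
  have hsplit : replicate (count a s) a + s' = s := by
    rw [← filter_eq', filter_add_not]
  have has : a ∉ s' := fun h => of_mem_filter h rfl
  have hlt : s' < s := (filter_le _ s).lt_of_ne fun h : s' = s => has (h ▸ ha)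
  have hdisj : Disjoint (replicate (count a s) a) s' :=
    disjoint_left.2 fun hb => eq_of_mem_replicate hb ▸ has
  rw [← hsplit, sum_Iic_add_of_disjoint hdisj, sum_Iic_replicate, even_replicate_add_iff has]
  simp_rw [card_add, pow_add, ← mul_sum, card_replicate, ih _ hlt, ← sum_mul, neg_one_geom_sum,
    Nat.even_add_one]
  by_cases hk : Even (count a s) <;> simp [hk]

end Multiset

open UniqueFactorizationMonoid

namespace Polynomial

variable {F : Type*} [Field F]

noncomputable def liouville (f : F[X]) : ℤ := (-1) ^ bigOmega f

section Factorization

variable [DecidableEq F]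

lemma bigOmega_eq_card_normalizedFactors (f : F[X]) :
    bigOmega f = Multiset.card (normalizedFactors f) := by
  rw [bigOmega, normalizedFactors, Multiset.card_map]

lemma monic_of_mem_normalizedFactors {f p : F[X]} (hp : p ∈ normalizedFactors f) : p.Monic :=
  normalize_normalized_factor p hp ▸ monic_normalize (irreducible_of_normalized_factor p hp).ne_zero

lemma monic_prod_of_le_normalizedFactors {f : F[X]} {t : Multiset F[X]}
    (ht : t ≤ normalizedFactors f) : t.prod.Monic := by
  simpa using monic_multiset_prod_of_monic t id fun p hp =>
    monic_of_mem_normalizedFactors (Multiset.mem_of_le ht hp)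

lemma Monic.prod_normalizedFactors {f : F[X]} (hf : f.Monic) : (normalizedFactors f).prod = f :=
  eq_of_monic_of_associated (monic_prod_of_le_normalizedFactors le_rfl) hf
    (UniqueFactorizationMonoid.prod_normalizedFactors hf.ne_zero)

lemma normalizedFactors_prod_of_le {f : F[X]} {t : Multiset F[X]} (ht : t ≤ normalizedFactors f) :
    normalizedFactors t.prod = t := by
  rw [normalizedFactors_prod_eq t fun p hp =>
    irreducible_of_normalized_factor p (Multiset.mem_of_le ht hp)]
  exact (Multiset.map_congr rfl fun p hp =>
    normalize_normalized_factor p (Multiset.mem_of_le ht hp)).trans (Multiset.map_id t)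

lemma Monic.bigOmega_le_natDegree {f : F[X]} (hf : f.Monic) : bigOmega f ≤ f.natDegree := by
  have hdeg : ∀ p ∈ normalizedFactors f, 1 ≤ p.natDegree := fun p hp =>
    (irreducible_of_normalized_factor p hp).natDegree_pos
  calc bigOmega f = Multiset.card (normalizedFactors f) := bigOmega_eq_card_normalizedFactors f
    _ ≤ ((normalizedFactors f).map natDegree).sum := by
      simpa using Multiset.card_nsmul_le_sum (s := (normalizedFactors f).map natDegree) (a := 1)
        (by simpa using hdeg)
    _ = f.natDegree := by
      rw [← natDegree_multiset_prod _ (zero_notMem_normalizedFactors f), hf.prod_normalizedFactors]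

lemma Monic.eq_of_mul_self_eq {r u : F[X]} (hr : r.Monic) (hu : u.Monic) (h : r * r = u * u) :
    r = u := by
  have hnf := congrArg normalizedFactors h
  rw [normalizedFactors_mul hr.ne_zero hr.ne_zero,
    normalizedFactors_mul hu.ne_zero hu.ne_zero] at hnf
  rw [← hr.prod_normalizedFactors, ← hu.prod_normalizedFactors]
  congr 1
  ext p
  have := congrArg (Multiset.count p) hnf
  simp only [Multiset.count_add] at this
  omega

lemma Monic.even_normalizedFactors_iff {f : F[X]} (hf : f.Monic) :
    Even (normalizedFactors f) ↔ ∃ r : F[X], r.Monic ∧ r * r = f := by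
  constructor
  · rintro ⟨m, hm⟩
    have hle : m ≤ normalizedFactors f := hm ▸ Multiset.le_add_right m m
    exact ⟨m.prod, monic_prod_of_le_normalizedFactors hle,
      by rw [← Multiset.prod_add, ← hm, hf.prod_normalizedFactors]⟩
  · rintro ⟨r, hr, rfl⟩
    exact ⟨normalizedFactors r, normalizedFactors_mul hr.ne_zero hr.ne_zero⟩

noncomputable def monicDivisors (f : F[X]) : Finset F[X] :=
  (Finset.Iic (normalizedFactors f)).image Multiset.prod

lemma mem_monicDivisors {f g : F[X]} (hf : f.Monic) :
    g ∈ monicDivisors f ↔ g.Monic ∧ g ∣ f := by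
  simp only [monicDivisors, mem_image, Finset.mem_Iic]
  constructor
  · rintro ⟨t, ht, rfl⟩
    exact ⟨monic_prod_of_le_normalizedFactors ht,
      hf.prod_normalizedFactors ▸ Multiset.prod_dvd_prod_of_le ht⟩
  · rintro ⟨hg, hgf⟩
    exact ⟨normalizedFactors g,
      (dvd_iff_normalizedFactors_le_normalizedFactors hg.ne_zero hf.ne_zero).1 hgf,
      hg.prod_normalizedFactors⟩

open scoped Classical in
lemma sum_liouville_monicDivisors (f : F[X]) :
    ∑ g ∈ monicDivisors f, liouville g = if Even (normalizedFactors f) then 1 else 0 := by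
  rw [monicDivisors, sum_image fun s hs t ht h => by
    rw [← normalizedFactors_prod_of_le (Finset.mem_Iic.1 hs),
      ← normalizedFactors_prod_of_le (Finset.mem_Iic.1 ht), h]]
  rw [← Multiset.sum_Iic_neg_one_pow_card]
  refine sum_congr rfl fun t ht => ?_
  rw [liouville, bigOmega_eq_card_normalizedFactors,
    normalizedFactors_prod_of_le (Finset.mem_Iic.1 ht)]

end Factorization

section FiniteField

open scoped Classical

variable [Fintype F]

noncomputable instance (n : ℕ) : Fintype {p : F[X] // p.Monic ∧ p.natDegree = n} :=
  Fintype.ofEquiv (Fin n → F) ((monicEquivDegreeLT n).trans (degreeLTEquiv F n).toEquiv).symm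

variable (F) in
noncomputable def monics (n : ℕ) : Finset F[X] :=
  univ.map (Function.Embedding.subtype fun p : F[X] => p.Monic ∧ p.natDegree = n)

@[simp]
lemma mem_monics {n : ℕ} {f : F[X]} : f ∈ monics F n ↔ f.Monic ∧ f.natDegree = n := by
  simp [monics]

variable (F) in
lemma card_monics (n : ℕ) : #(monics F n) = Fintype.card F ^ n := by
  rw [monics, card_map, card_univ, Fintype.card_congr
    ((monicEquivDegreeLT n).trans (degreeLTEquiv F n).toEquiv), Fintype.card_fun, Fintype.card_fin]

lemma card_filter_dvd_monics {g : F[X]} (hg : g.Monic) {d : ℕ} (hgd : g.natDegree ≤ d) :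
    #{f ∈ monics F d | g ∣ f} = Fintype.card F ^ (d - g.natDegree) := by
  rw [← card_monics F (d - g.natDegree)]
  symm
  refine card_bij (fun h _ => g * h) (fun h hh => ?_) (fun h _ h' _ => mul_left_cancel₀ hg.ne_zero)
    fun f hf => ?_
  · rw [mem_monics] at hh
    simp only [mem_filter, mem_monics, hg.natDegree_mul hh.1, hh.2, dvd_mul_right]
    exact ⟨⟨hg.mul hh.1, by omega⟩, trivial⟩
  · simp only [mem_filter, mem_monics] at hf
    obtain ⟨⟨hfm, rfl⟩, h, rfl⟩ := hf
    have hh := hg.of_mul_monic_left hfm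
    exact ⟨h, by simp [hh, hg.natDegree_mul hh], rfl⟩

variable [DecidableEq F]

lemma card_filter_even_normalizedFactors_monics (d : ℕ) :
    #{f ∈ monics F d | Even (normalizedFactors f)} =
      if Even d then Fintype.card F ^ (d / 2) else 0 := by
  have hsq : ∀ f, f ∈ monics F d ∧ Even (normalizedFactors f) ↔
      ∃ r : F[X], r.Monic ∧ r.natDegree + r.natDegree = d ∧ r * r = f := by
    intro f
    rw [mem_monics]
    constructor
    · rintro ⟨⟨hf, rfl⟩, heven⟩
      obtain ⟨r, hr, rfl⟩ := hf.even_normalizedFactors_iff.1 heven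
      exact ⟨r, hr, (hr.natDegree_mul hr).symm, rfl⟩
    · rintro ⟨r, hr, hrd, rfl⟩
      exact ⟨⟨hr.mul hr, by rw [hr.natDegree_mul hr, hrd]⟩,
        (hr.mul hr).even_normalizedFactors_iff.2 ⟨r, hr, rfl⟩⟩
  split_ifs with hd
  · obtain ⟨e, rfl⟩ := hd
    rw [← card_monics F, show (e + e) / 2 = e by omega]
    symm
    refine card_bij (fun r _ => r * r) (fun r hr => ?_)
      (fun r hr u hu h => ?_) fun f hf => ?_
    · rw [mem_monics] at hr
      exact mem_filter.2 <| (hsq _).2 ⟨r, hr.1, by rw [hr.2], rfl⟩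
    · exact (mem_monics.1 hr).1.eq_of_mul_self_eq (mem_monics.1 hu).1 h
    · obtain ⟨r, hr, hrd, rfl⟩ := (hsq f).1 (mem_filter.1 hf)
      exact ⟨r, mem_monics.2 ⟨hr, by omega⟩, rfl⟩
  · refine card_eq_zero.2 (filter_eq_empty_iff.2 fun f hf heven => hd ?_)
    obtain ⟨r, -, hrd, -⟩ := (hsq f).1 ⟨hf, heven⟩
    exact ⟨_, hrd.symm⟩

lemma sum_monics_sum_liouville_monicDivisors (d : ℕ) :
    ∑ f ∈ monics F d, ∑ g ∈ monicDivisors f, liouville g =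
      ∑ a ∈ range (d + 1), (∑ g ∈ monics F a, liouville g) * (Fintype.card F : ℤ) ^ (d - a) := by
  have hdvd : ∀ f g, f ∈ monics F d ∧ g ∈ monicDivisors f ↔
      f ∈ {f ∈ monics F d | g ∣ f} ∧ g ∈ (range (d + 1)).biUnion (monics F) := by
    intro f g
    simp only [mem_filter, mem_biUnion, mem_range, mem_monics, Nat.lt_succ_iff]
    constructor
    · rintro ⟨⟨hf, rfl⟩, hg⟩
      obtain ⟨hg, hgf⟩ := (mem_monicDivisors hf).1 hg
      exact ⟨⟨⟨hf, rfl⟩, hgf⟩, _, natDegree_le_of_dvd hgf hf.ne_zero, hg, rfl⟩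
    · rintro ⟨⟨⟨hf, rfl⟩, hgf⟩, _, -, hg, -⟩
      exact ⟨⟨hf, rfl⟩, (mem_monicDivisors hf).2 ⟨hg, hgf⟩⟩
  have hdisj : (range (d + 1) : Set ℕ).PairwiseDisjoint (monics F) := fun a _ b _ hab =>
    disjoint_left.2 fun g hga hgb => hab ((mem_monics.1 hga).2.symm.trans (mem_monics.1 hgb).2)
  rw [sum_comm' hdvd, sum_biUnion hdisj]
  refine sum_congr rfl fun a ha => ?_
  rw [sum_mul]
  refine sum_congr rfl fun g hg => ?_
  obtain ⟨hgm, rfl⟩ := mem_monics.1 hg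
  rw [sum_const, card_filter_dvd_monics hgm (Nat.lt_succ_iff.1 (mem_range.1 ha)), nsmul_eq_mul,
    mul_comm]
  push_cast
  rfl

lemma sum_range_sum_liouville_mul_pow (d : ℕ) :
    ∑ a ∈ range (d + 1), (∑ g ∈ monics F a, liouville g) * (Fintype.card F : ℤ) ^ (d - a) =
      if Even d then (Fintype.card F : ℤ) ^ (d / 2) else 0 := by
  rw [← sum_monics_sum_liouville_monicDivisors,
    sum_congr rfl fun f _ => sum_liouville_monicDivisors f, sum_boole,
    card_filter_even_normalizedFactors_monics]
  split_ifs <;> simp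

end FiniteField

end Polynomial

lemma neg_one_pow_mul_eq_pow_of_sum_range {R : Type*} [CommRing R] (q : R) (T : ℕ → R)
    (hT : ∀ d, ∑ a ∈ range (d + 1), T a * q ^ (d - a) = if Even d then q ^ (d / 2) else 0)
    (d : ℕ) : (-1) ^ d * T d = q ^ ((d + 1) / 2) := by
  have hrec : ∀ n, T (n + 1) = (if Even (n + 1) then q ^ ((n + 1) / 2) else 0) -
      q * (if Even n then q ^ (n / 2) else 0) := by
    intro n
    rw [← hT, ← hT, sum_range_succ, Nat.sub_self, pow_zero, mul_one, mul_sum,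
      sum_congr rfl fun a ha => ?_]
    · ring
    · rw [Nat.sub_add_comm (Nat.lt_succ_iff.1 (mem_range.1 ha)), pow_succ]
      ring
  cases d with
  | zero => simpa using hT 0
  | succ n =>
    obtain ⟨m, rfl | rfl⟩ := Nat.even_or_odd' n
    · simp [hrec, pow_succ, pow_mul, show (2 * m + 1 + 1) / 2 = m + 1 by omega]
      ring
    · simp [hrec, pow_succ, pow_mul, Nat.even_add_one, show (2 * m + 1 + 1) / 2 = m + 1 by omega,
        show (2 * m + 1 + 1 + 1) / 2 = m + 1 by omega]

theorem statement7_general (F : Type*) [Field F] [Fintype F] (d : ℕ) :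
    ∑ᶠ f ∈ {f : F[X] | f.Monic ∧ f.natDegree = d}, (-1 : ℤ) ^ (d - bigOmega f) =
      (Fintype.card F : ℤ) ^ ((d + 1) / 2) := by
  classical
  have hset : {f : F[X] | f.Monic ∧ f.natDegree = d} = ↑(monics F d) := by
    ext f
    simp
  have hsign : ∀ f ∈ monics F d, (-1 : ℤ) ^ (d - bigOmega f) = (-1) ^ d * liouville f := by
    intro f hf
    obtain ⟨hfm, rfl⟩ := mem_monics.1 hf
    have hle := hfm.bigOmega_le_natDegree
    rw [liouville, ← pow_add, show f.natDegree + bigOmega f =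
      f.natDegree - bigOmega f + 2 * bigOmega f by omega, pow_add, pow_mul, neg_one_sq, one_pow,
      mul_one]
  rw [hset, finsum_mem_coe_finset, sum_congr rfl hsign, ← mul_sum]
  exact neg_one_pow_mul_eq_pow_of_sum_range _ _ sum_range_sum_liouville_mul_pow d

/-- The sum of `sgn(f) = (-1)^(d - Ω(f))` over all monic degree-`d` polynomials over
`F_q` equals `q^⌈d/2⌉`. -/
theorem statement7 (F : Type*) [Field F] [Fintype F] (d : ℕ) (hd : 0 < d) :
    ∑ᶠ f ∈ {f : F[X] | f.Monic ∧ f.natDegree = d}, (-1 : ℤ) ^ (d - bigOmega f) =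
      (Fintype.card F : ℤ) ^ ((d + 1) / 2) :=
  statement7_general F d
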